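/- arXiv:1301.4359 — 2 statements merged into one kernel-verified Lean document; each statement's English description precedes it below -/
import Mathlib

section
/- The series 1 + (1/5)(1/2) + (1/9)((1·3)/(2·4)) + ··· , i.e. ∑_{n=0}^∞ ((1/2)_n / n!) · 1/(4n+1), equals π^{3/2} / (2√2 Γ(3/4)^2). -/
open Real BigOperators

noncomputable def poch (a : ℝ) (n : ℕ) : ℝ := ∏ i ∈ Finset.range n, (a + i)

noncomputable def digamma (x : ℝ) : ℝ := deriv Real.Gamma x / Real.Gamma x

/-! The coefficients `(1/2)_n / n!` are those of the binomial series of `(1 - x)^(-1/2)`, and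
`1 / (4n + 1) = (1/4) ∫₀¹ x^(n - 3/4) dx`. Integrating the series term by term (the terms are
nonnegative, so they dominate themselves) gives `(1/4) B(1/4, 1/2) = Γ(1/4) Γ(1/2) / (4 Γ(3/4))`,
and the reflection formula `Γ(1/4) Γ(3/4) = π / sin(π/4) = π √2` yields the closed form. -/

open Set MeasureTheory
open scoped Nat

lemma poch_eq_ascPochhammer_eval (a : ℝ) (n : ℕ) : poch a n = (ascPochhammer ℝ n).eval a := by
  induction n with
  | zero => simp [poch]
  | succ n ih => rw [poch, Finset.prod_range_succ, ← poch, ih, ascPochhammer_succ_eval]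

lemma poch_div_factorial_eq_choose (a : ℝ) (n : ℕ) :
    poch a n / n ! = Ring.choose (a + n - 1) n := by
  rw [← Ring.multichoose_eq, poch_eq_ascPochhammer_eval, ← Polynomial.ascPochhammer_smeval_eq_eval,
    ← Ring.factorial_nsmul_multichoose_eq_ascPochhammer, nsmul_eq_mul]
  field_simp

lemma poch_nonneg {a : ℝ} (ha : 0 ≤ a) (n : ℕ) : 0 ≤ poch a n :=
  Finset.prod_nonneg fun i _ => by positivity

lemma hasSum_poch_div_factorial_mul_pow (a : ℝ) {x : ℝ} (hx : |x| < 1) :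
    HasSum (fun n => poch a n / n ! * x ^ n) ((1 - x) ^ (-a)) := by
  have hball : x ∈ Metric.eball (0 : ℝ) 1 := by
    simpa [Metric.mem_eball, edist_dist, Real.dist_eq] using hx
  have h := (Real.one_div_one_sub_rpow_hasFPowerSeriesOnBall_zero a).hasSum hball
  simp only [FormalMultilinearSeries.ofScalars_apply_eq, smul_eq_mul, zero_add] at h
  have h1 : 0 ≤ 1 - x := by linarith [(abs_lt.1 hx).2]
  rw [Real.rpow_neg h1, ← one_div]
  simpa only [poch_div_factorial_eq_choose] using h

lemma ofReal_rpow_mul_one_sub_rpow {x : ℝ} (hx : x ∈ Icc 0 1) (s t : ℝ) :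
    ((x ^ (s - 1) * (1 - x) ^ (t - 1) : ℝ) : ℂ) =
      (x : ℂ) ^ ((s : ℂ) - 1) * (1 - (x : ℂ)) ^ ((t : ℂ) - 1) := by
  rw [Complex.ofReal_mul, Complex.ofReal_cpow hx.1, Complex.ofReal_cpow (sub_nonneg.2 hx.2)]
  push_cast
  rfl

lemma integrableOn_Ioo_rpow_mul_one_sub_rpow {s t : ℝ} (hs : 0 < s) (ht : 0 < t) :
    IntegrableOn (fun x : ℝ => x ^ (s - 1) * (1 - x) ^ (t - 1)) (Ioo 0 1) := by
  have h := Complex.betaIntegral_convergent (u := s) (v := t) (by simpa) (by simpa)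
  rw [intervalIntegrable_iff_integrableOn_Ioo_of_le zero_le_one] at h
  simpa [IntegrableOn] using (h.congr_fun (fun x hx =>
    (ofReal_rpow_mul_one_sub_rpow (Ioo_subset_Icc_self hx) s t).symm) measurableSet_Ioo).re

lemma integral_Ioo_rpow_mul_one_sub_rpow {s t : ℝ} (hs : 0 < s) (ht : 0 < t) :
    ∫ x in Ioo (0 : ℝ) 1, x ^ (s - 1) * (1 - x) ^ (t - 1) = Gamma s * Gamma t / Gamma (s + t) := by
  have h := Complex.Gamma_mul_Gamma_eq_betaIntegral (s := s) (t := t) (by simpa) (by simpa)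
  rw [Complex.betaIntegral, intervalIntegral.integral_of_le zero_le_one,
    integral_Ioc_eq_integral_Ioo, ← setIntegral_congr_fun measurableSet_Ioo
      (fun x hx => ofReal_rpow_mul_one_sub_rpow (Ioo_subset_Icc_self hx) s t),
    integral_complex_ofReal, ← Complex.ofReal_add, Complex.Gamma_ofReal, Complex.Gamma_ofReal,
    Complex.Gamma_ofReal] at h
  have hG : Gamma (s + t) ≠ 0 := (Gamma_pos_of_pos (by linarith)).ne'
  rw [eq_div_iff hG, mul_comm]
  exact_mod_cast h.symm

theorem hasSum_poch_div_factorial_div_add {a s : ℝ} (ha₀ : 0 ≤ a) (ha₁ : a < 1) (hs : 0 < s) :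
    HasSum (fun n : ℕ => poch a n / n ! / (n + s))
      (Gamma s * Gamma (1 - a) / Gamma (s + (1 - a))) := by
  set F : ℕ → ℝ → ℝ := fun n x => poch a n / n ! * x ^ ((n + s : ℝ) - 1)
  have hns (n : ℕ) : (0 : ℝ) < n + s := by positivity
  have hF_int (n : ℕ) : IntegrableOn (F n) (Ioo 0 1) := by
    have h := (integrableOn_Ioo_rpow_mul_one_sub_rpow (hns n) one_pos).const_mul (poch a n / n !)
    simp only [sub_self, rpow_zero, mul_one] at h
    exact h
  have hF_integral (n : ℕ) : ∫ x in Ioo 0 1, F n x = poch a n / n ! / (n + s) := by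
    have h := integral_Ioo_rpow_mul_one_sub_rpow (hns n) one_pos
    simp only [sub_self, rpow_zero, mul_one, Gamma_one, Gamma_add_one (hns n).ne'] at h
    rw [integral_const_mul, h, ← mul_div_assoc,
      mul_div_mul_right _ _ (Gamma_pos_of_pos (hns n)).ne']
  have hF_nonneg (n : ℕ) (x : ℝ) (hx : x ∈ Ioo (0 : ℝ) 1) : 0 ≤ F n x :=
    mul_nonneg (div_nonneg (poch_nonneg ha₀ n) (Nat.cast_nonneg _)) (rpow_nonneg hx.1.le _)
  have hF_sum (x : ℝ) (hx : x ∈ Ioo (0 : ℝ) 1) :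
      HasSum (fun n => F n x) (x ^ (s - 1) * (1 - x) ^ ((1 - a) - 1)) := by
    have h := (hasSum_poch_div_factorial_mul_pow a
      (abs_lt.2 ⟨by linarith [hx.1], hx.2⟩)).mul_left (x ^ (s - 1))
    rw [sub_sub_cancel_left]
    refine h.congr_fun fun n => ?_
    simp only [F]
    rw [show (n + s : ℝ) - 1 = n + (s - 1) by ring, rpow_add hx.1, rpow_natCast]
    ring
  have h := hasSum_integral_of_dominated_convergence F (fun n => (hF_int n).aestronglyMeasurable)
    (fun n => (ae_restrict_mem measurableSet_Ioo).mono fun x hx => by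
      rw [norm_of_nonneg (hF_nonneg n x hx)])
    ((ae_restrict_mem measurableSet_Ioo).mono fun x hx => (hF_sum x hx).summable)
    ((integrableOn_Ioo_rpow_mul_one_sub_rpow hs (by linarith)).congr_fun
      (fun x hx => (hF_sum x hx).tsum_eq.symm) measurableSet_Ioo)
    ((ae_restrict_mem measurableSet_Ioo).mono hF_sum)
  rwa [funext hF_integral, integral_Ioo_rpow_mul_one_sub_rpow hs (by linarith)] at h

lemma Gamma_one_quarter_mul_Gamma_three_quarters : Gamma (1 / 4) * Gamma (3 / 4) = π * √2 := by
  have h := Gamma_mul_Gamma_one_sub (1 / 4)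
  rw [show π * (1 / 4) = π / 4 by ring, sin_pi_div_four] at h
  norm_num at h
  rw [h]
  field_simp
  exact (sq_sqrt zero_le_two).symm

theorem stmt2 :
    ∑' n : ℕ, (poch (1/2) n / n.factorial) * (1 / (4 * (n : ℝ) + 1)) =
      π ^ ((3 : ℝ)/2) / (2 * Real.sqrt 2 * Real.Gamma (3/4) ^ 2) := by
  have h : HasSum (fun n : ℕ => 1 / 4 * (poch (1 / 2) n / n ! / (n + 1 / 4)))
      (1 / 4 * (Gamma (1 / 4) * Gamma (1 / 2) / Gamma (3 / 4))) := by
    have h := (hasSum_poch_div_factorial_div_add (a := 1 / 2) (s := 1 / 4)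
      (by norm_num) (by norm_num) (by norm_num)).mul_left (1 / 4)
    norm_num at h
    exact h
  have hterm (n : ℕ) : poch (1 / 2) n / n ! * (1 / (4 * n + 1)) =
      1 / 4 * (poch (1 / 2) n / n ! / (n + 1 / 4)) := by
    field_simp
  have hΓ : Gamma (1 / 4) = π * √2 / Gamma (3 / 4) :=
    eq_div_of_mul_eq (Gamma_pos_of_pos (by norm_num)).ne'
      Gamma_one_quarter_mul_Gamma_three_quarters
  have hπ : π ^ ((3 : ℝ) / 2) = π * √π := by
    rw [show (3 : ℝ) / 2 = 1 + 1 / 2 by norm_num, rpow_add pi_pos, rpow_one, sqrt_eq_rpow]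
  rw [tsum_congr hterm, h.tsum_eq, hΓ, Gamma_one_half_eq, hπ]
  field_simp
  rw [sq_sqrt zero_le_two]
  norm_num
end

section
/- The series ∑_{n=0}^∞ ((1/2)_n / n!)^2 · 1/(n+1) equals 4/π. -/
/-!
With `c n = (1/2)_n / n!`, the partial sums telescope: `∑_{n<N} c n ^ 2 / (n + 1) = 4 N (c N)²`.
The `k`-th partial product of Wallis' formula is exactly `1 / ((2k + 1) (c k)²)`, so
`(2N + 1) (c N)² → 2 / π` and the partial sums tend to `4 / π`.
-/

open Real BigOperators

open Filter Finset Topology Nat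

lemma poch_succ (a : ℝ) (n : ℕ) : poch a (n + 1) = poch a n * (a + n) :=
  prod_range_succ _ _

lemma poch_half_div_factorial_succ (n : ℕ) :
    poch (1/2) (n + 1) / (n + 1)! = poch (1/2) n / n ! * ((2 * n + 1) / (2 * n + 2)) := by
  rw [poch_succ, factorial_succ]
  push_cast
  field_simp
  ring

lemma sum_range_sq_poch_half_div_factorial (N : ℕ) :
    ∑ n ∈ range N, (poch (1/2) n / n !) ^ 2 * (1 / ((n : ℝ) + 1)) =
      4 * N * (poch (1/2) N / N !) ^ 2 := by
  induction N with
  | zero => simp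
  | succ N ih =>
    rw [sum_range_succ, ih, poch_half_div_factorial_succ]
    push_cast
    field_simp
    ring

lemma Real.Wallis.W_mul_sq_poch_half_div_factorial (k : ℕ) :
    Wallis.W k * ((2 * k + 1) * (poch (1/2) k / k !) ^ 2) = 1 := by
  induction k with
  | zero => simp [Wallis.W, poch]
  | succ k ih =>
    rw [Wallis.W_succ, poch_half_div_factorial_succ]
    convert ih using 1
    push_cast
    field_simp
    ring

lemma tendsto_mul_sq_poch_half_div_factorial :
    Tendsto (fun k : ℕ => (2 * k + 1) * (poch (1/2) k / k !) ^ 2) atTop (𝓝 (2 / π)) := by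
  have h := Wallis.tendsto_W_nhds_pi_div_two.inv₀ (by positivity)
  rw [inv_div] at h
  refine h.congr fun k => ?_
  rw [inv_eq_of_mul_eq_one_right (Wallis.W_mul_sq_poch_half_div_factorial k)]

theorem stmt8 :
    ∑' n : ℕ, (poch (1/2) n / n.factorial) ^ 2 * (1 / ((n : ℝ) + 1)) = 4 / π := by
  have hlim : Tendsto (fun N : ℕ => 4 * (N : ℝ) * (poch (1/2) N / N !) ^ 2) atTop (𝓝 (4 / π)) := by
    have h := (tendsto_mul_sq_poch_half_div_factorial.mul
      (tendsto_natCast_div_add_atTop (1/2 : ℝ))).const_mul 2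
    rw [mul_one, ← mul_div_assoc, show (2 : ℝ) * 2 = 4 by norm_num] at h
    refine h.congr fun N => ?_
    field_simp
    ring
  refine HasSum.tsum_eq ?_
  rw [hasSum_iff_tendsto_nat_of_nonneg (fun n => by positivity)]
  simpa only [sum_range_sq_poch_half_div_factorial] using hlim
end
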